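/- For every integer d ≥ 14 and every integer g satisfying (d+9)·√(d+6) − 9d/2 − 43/2 ≤ g ≤ (d²−4)/8 and (d,g) ≠ (14,22), at least one of the following holds: g ≤ (d²−2d+5)/8, or g ≥ (d+6)·√(d+3) − 7d/2 − 11. (All inequalities are between real numbers, √ denoting the real square root.) -/
import Mathlib


/-- Arithmetic core of the existence theorem for s = 3: every integer point
(d,g) with g1(d) ≤ g ≤ G2(d), d ≥ 14, other than (14,22), lies in
[g1,G1] ∪ [g2,G2]. -/
theorem stmt_0 (d g : ℤ) (hd : 14 ≤ d)
    (hg1 : ((d : ℝ) + 9) * Real.sqrt ((d : ℝ) + 6) - 9 * (d : ℝ) / 2 - 43 / 2 ≤ (g : ℝ))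
    (hg2 : (g : ℝ) ≤ ((d : ℝ) ^ 2 - 4) / 8)
    (hne : (d, g) ≠ (14, 22)) :
    (g : ℝ) ≤ ((d : ℝ) ^ 2 - 2 * (d : ℝ) + 5) / 8 ∨
      ((d : ℝ) + 6) * Real.sqrt ((d : ℝ) + 3) - 7 * (d : ℝ) / 2 - 11 ≤ (g : ℝ) := by
  by_cases hG1 : (g : ℝ) ≤ ((d : ℝ) ^ 2 - 2 * (d : ℝ) + 5) / 8
  · exact Or.inl hG1
  · right
    push_neg at hG1
    have hdR : (14 : ℝ) ≤ (d : ℝ) := by exact_mod_cast hd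
    -- integer consequence: d^2 - 2d + 5 < 8g
    have hIntR : ((d : ℝ) ^ 2 - 2 * (d : ℝ) + 5) < 8 * (g : ℝ) := by nlinarith [hG1]
    have hInt : d ^ 2 - 2 * d + 5 < 8 * g := by exact_mod_cast hIntR
    set s := Real.sqrt ((d : ℝ) + 3) with hs
    have hs0 : 0 ≤ s := Real.sqrt_nonneg _
    have hs2 : s ^ 2 = (d : ℝ) + 3 := Real.sq_sqrt (by linarith)
    have hR0 : 0 ≤ (g : ℝ) + 7 * (d : ℝ) / 2 + 11 := by nlinarith [hIntR, hdR]
    suffices h : ((d : ℝ) + 6) ^ 2 * ((d : ℝ) + 3) ≤ ((g : ℝ) + 7 * (d : ℝ) / 2 + 11) ^ 2 by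
      have hsq : (((d : ℝ) + 6) * s) ^ 2 ≤ ((g : ℝ) + 7 * (d : ℝ) / 2 + 11) ^ 2 := by
        rw [mul_pow, hs2]; exact h
      nlinarith [hsq, hR0, mul_nonneg (by linarith : (0:ℝ) ≤ (d:ℝ)+6) hs0]
    rcases lt_or_ge d 17 with h17 | h17
    · interval_cases d
      · -- d = 14 : g ≠ 22 and 8g > 173, so g ≥ 23
        have hg23 : 23 ≤ g := by
          have : g ≠ 22 := by intro h; exact hne (by simp [h])
          omega
        have hg23R : (23 : ℝ) ≤ (g : ℝ) := by exact_mod_cast hg23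
        push_cast
        nlinarith [hg23R]
      · -- d = 15 : 8g > 200, so g ≥ 26
        have hg26 : 26 ≤ g := by omega
        have hg26R : (26 : ℝ) ≤ (g : ℝ) := by exact_mod_cast hg26
        push_cast
        nlinarith [hg26R]
      · -- d = 16 : 8g > 229, so g ≥ 29
        have hg29 : 29 ≤ g := by omega
        have hg29R : (29 : ℝ) ≤ (g : ℝ) := by exact_mod_cast hg29
        push_cast
        nlinarith [hg29R]
    · -- d ≥ 17 : use 8g ≥ d² − 2d + 6 and the quartic inequality
      have h8 : d ^ 2 - 2 * d + 6 ≤ 8 * g := by omega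
      have h8R : (d : ℝ) ^ 2 - 2 * (d : ℝ) + 6 ≤ 8 * (g : ℝ) := by exact_mod_cast h8
      have h17R : (17 : ℝ) ≤ (d : ℝ) := by exact_mod_cast h17
      have hq : (0 : ℝ) ≤ ((d:ℝ) - 17) := by linarith
      nlinarith [h8R, h17R, sq_nonneg ((d:ℝ) - 17), mul_nonneg (mul_nonneg hq hq) hq,
        mul_nonneg (mul_nonneg (mul_nonneg hq hq) hq) hq,
        sq_nonneg (8 * (g : ℝ) - ((d:ℝ)^2 - 2*(d:ℝ) + 6))]
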